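/- arXiv:2504.13927 — 6 statements merged into one kernel-verified Lean document; each statement's English description precedes it below -/
import Mathlib

section
/- Let k ≥ 2 be an integer and γ > (k+1)/(k−1). Then the equation x = ((1 + γx)/(γ + x))^k has at least three distinct solutions in the positive reals: x = 1, a solution z* > 1, and a solution z_* with 0 < z_* < 1. -/
theorem stmt5 (k : ℕ) (hk : 2 ≤ k) (γ : ℝ) (hγ : ((k : ℝ) + 1) / ((k : ℝ) - 1) < γ) :
    ∃ zs zb : ℝ, 0 < zs ∧ zs < 1 ∧ 1 < zb ∧
      (1 : ℝ) = ((1 + γ * 1) / (γ + 1)) ^ k ∧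
      zs = ((1 + γ * zs) / (γ + zs)) ^ k ∧
      zb = ((1 + γ * zb) / (γ + zb)) ^ k := by
  have hk2 : (2:ℝ) ≤ (k:ℝ) := by exact_mod_cast hk
  have hk1 : (0:ℝ) < (k:ℝ) - 1 := by linarith
  have hkey : (k:ℝ) + 1 < γ * ((k:ℝ) - 1) := (div_lt_iff₀ hk1).mp hγ
  have hγ1 : 1 < γ := by nlinarith
  set c : ℝ := (k:ℝ) * γ - (k:ℝ) - γ with hc_def
  have hc : 1 < c := by simp only [hc_def]; nlinarith
  set a : ℝ := (1 + c) / 2 with ha_def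
  have ha1 : 1 < a := by simp only [ha_def]; linarith
  have hac : a < c := by simp only [ha_def]; linarith
  set b : ℝ := γ ^ k + a with hb_def
  have hγk1 : 1 < γ ^ k := one_lt_pow₀ hγ1 (by omega)
  have hab : a < b := by simp only [hb_def]; linarith
  set F : ℝ → ℝ := fun x => ((1 + γ * x) / (γ + x)) ^ k - x with hF_def
  -- F a > 0 via Bernoulli
  have hFa : 0 < F a := by
    have hden : 0 < γ + a := by linarith
    have hu : 0 ≤ (γ - 1) * (a - 1) / (γ + a) := div_nonneg (by nlinarith) hden.le
    have hb1 : 1 + (k:ℝ) * ((γ - 1) * (a - 1) / (γ + a)) ≤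
        (1 + (γ - 1) * (a - 1) / (γ + a)) ^ k :=
      one_add_mul_le_pow (by linarith) k
    have heq : (1 + γ * a) / (γ + a) = 1 + (γ - 1) * (a - 1) / (γ + a) := by
      field_simp; ring
    have hlt : a < 1 + (k:ℝ) * ((γ - 1) * (a - 1) / (γ + a)) := by
      have h1 : a - 1 < (k:ℝ) * ((γ - 1) * (a - 1)) / (γ + a) := by
        rw [lt_div_iff₀ hden]; nlinarith
      rw [mul_div_assoc] at h1
      linarith
    simp only [hF_def, heq]
    linarith
  -- F b < 0
  have hFb : F b < 0 := by
    have hdenb : 0 < γ + b := by linarith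
    have hnum : 0 < 1 + γ * b := by nlinarith
    have hlt : (1 + γ * b) / (γ + b) < γ := by
      rw [div_lt_iff₀ hdenb]; nlinarith
    have hnn : 0 ≤ (1 + γ * b) / (γ + b) := by positivity
    have := pow_lt_pow_left₀ hlt hnn (by omega : k ≠ 0)
    simp only [hF_def, hb_def]
    have : ((1 + γ * b) / (γ + b)) ^ k < γ ^ k := this
    simp only [hb_def] at this
    linarith
  -- continuity
  have hcont : ContinuousOn F (Set.Icc a b) := by
    apply ContinuousOn.sub _ continuousOn_id
    apply ContinuousOn.pow
    apply ContinuousOn.div (by fun_prop) (by fun_prop)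
    intro x hx
    have := hx.1
    intro h
    nlinarith [hx.1]
  have hsub := intermediate_value_Icc' (le_of_lt hab) hcont
  have h0 : (0:ℝ) ∈ Set.Icc (F b) (F a) := ⟨le_of_lt hFb, le_of_lt hFa⟩
  obtain ⟨zb, hzb_mem, hzb_eq⟩ := hsub h0
  have hzb1 : 1 < zb := lt_of_lt_of_le ha1 hzb_mem.1
  have hzb_fix : zb = ((1 + γ * zb) / (γ + zb)) ^ k := by
    have : ((1 + γ * zb) / (γ + zb)) ^ k - zb = 0 := hzb_eq
    linarith
  have hzb0 : 0 < zb := by linarith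
  have hdz : 0 < γ + zb := by linarith
  have hnz : 0 < 1 + γ * zb := by nlinarith
  refine ⟨1 / zb, zb, by positivity, by rw [div_lt_one hzb0]; exact hzb1, hzb1, ?_, ?_, hzb_fix⟩
  · rw [show (1 + γ * 1) / (γ + 1) = 1 by rw [mul_one, add_comm]; exact div_self (by linarith), one_pow]
  · have hrat : (1 + γ * (1 / zb)) / (γ + 1 / zb) = (γ + zb) / (1 + γ * zb) := by
      rw [div_eq_div_iff (by positivity) (by linarith)]
      field_simp
      ring
    rw [hrat, one_div]
    conv_lhs => rw [hzb_fix]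
    rw [← inv_pow, inv_div]
end

section
/- Let θ > 3. The numbers v₁ = (θ² − 2θ − 1 − (θ−1)√((θ+1)(θ−3)))/2 and v₂ = (θ² − 2θ − 1 + (θ−1)√((θ+1)(θ−3)))/2 are both positive solutions of the equation v = ((1 + θv)/(θ + v))². -/
theorem stmt6 (θ : ℝ) (hθ : 3 < θ)
    (v₁ v₂ : ℝ)
    (hv1 : v₁ = (θ ^ 2 - 2 * θ - 1 - (θ - 1) * Real.sqrt ((θ + 1) * (θ - 3))) / 2)
    (hv2 : v₂ = (θ ^ 2 - 2 * θ - 1 + (θ - 1) * Real.sqrt ((θ + 1) * (θ - 3))) / 2) :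
    (0 < v₁ ∧ v₁ = ((1 + θ * v₁) / (θ + v₁)) ^ 2) ∧
    (0 < v₂ ∧ v₂ = ((1 + θ * v₂) / (θ + v₂)) ^ 2) := by
  set s : ℝ := Real.sqrt ((θ + 1) * (θ - 3)) with hs
  have hsnn : 0 ≤ s := Real.sqrt_nonneg _
  have hs2 : s ^ 2 = (θ + 1) * (θ - 3) := by
    rw [hs, sq, Real.mul_self_sqrt (by nlinarith)]
  -- positivity
  have hp1 : 0 < v₁ := by
    rw [hv1]
    have h1 : (θ - 1) * s < θ ^ 2 - 2 * θ - 1 := by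
      nlinarith [sq_nonneg ((θ - 1) * s), sq_nonneg s, sq_nonneg (θ - 1)]
    linarith
  have hp2 : 0 < v₂ := by
    rw [hv2]
    have : 0 ≤ (θ - 1) * s := mul_nonneg (by linarith) hsnn
    nlinarith
  have hd1 : θ + v₁ ≠ 0 := ne_of_gt (by linarith)
  have hd2 : θ + v₂ ≠ 0 := ne_of_gt (by linarith)
  have key1 : v₁ * (θ + v₁) ^ 2 = (1 + θ * v₁) ^ 2 := by
    rw [hv1]
    linear_combination (-3/8 + s/8 + θ/2 - 3*θ*s/8 + θ^2/4 + 3*θ^2*s/8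
      - θ^3/2 - θ^3*s/8 + θ^4/8) * hs2
  have key2 : v₂ * (θ + v₂) ^ 2 = (1 + θ * v₂) ^ 2 := by
    rw [hv2]
    linear_combination (-3/8 - s/8 + θ/2 + 3*θ*s/8 + θ^2/4 - 3*θ^2*s/8
      - θ^3/2 + θ^3*s/8 + θ^4/8) * hs2
  refine ⟨⟨hp1, ?_⟩, ⟨hp2, ?_⟩⟩
  · rw [div_pow, eq_div_iff (pow_ne_zero 2 hd1)]; linarith [key1]
  · rw [div_pow, eq_div_iff (pow_ne_zero 2 hd2)]; linarith [key2]
end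

section
/- Let θ > 0 with θ ≠ 1, α > 0, M = |θ − θ^{-1}|. If real numbers s, τ satisfy (2α − M)s + α(θ + θ^{-1})τ = 0 and (θ + θ^{-1})s + (2 − αM)τ = 0, then s = 0 and τ = 0. -/
theorem stmt14 (θ α : ℝ) (hθ : 0 < θ) (hθ1 : θ ≠ 1) (hα : 0 < α)
    (M : ℝ) (hM : M = |θ - 1 / θ|) (s τ : ℝ)
    (h1 : (2 * α - M) * s + α * (θ + 1 / θ) * τ = 0)
    (h2 : (θ + 1 / θ) * s + (2 - α * M) * τ = 0) :
    s = 0 ∧ τ = 0 := by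
  have hθ0 : θ ≠ 0 := ne_of_gt hθ
  have hinv : θ * (1 / θ) = 1 := by field_simp
  have hne : θ - 1 / θ ≠ 0 := by
    intro h
    apply hθ1
    have : θ ^ 2 = 1 := by field_simp at h; nlinarith
    nlinarith
  have hMpos : 0 < M := hM ▸ abs_pos.mpr hne
  have hM2 : M ^ 2 = (θ - 1 / θ) ^ 2 := by rw [hM, sq_abs]
  have hDs : (-2 * M * (α ^ 2 + 1)) * s = 0 := by
    linear_combination (2 - α * M) * h1 - α * (θ + 1 / θ) * h2 - α * s * hM2 + 4 * α * s * hinv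
  have hDt : (-2 * M * (α ^ 2 + 1)) * τ = 0 := by
    linear_combination (2 * α - M) * h2 - (θ + 1 / θ) * h1 - α * τ * hM2 + 4 * α * τ * hinv
  have hD : (-2 * M * (α ^ 2 + 1)) ≠ 0 := by nlinarith
  exact ⟨by simpa [hD] using mul_eq_zero.mp hDs |>.resolve_left hD,
         by simpa [hD] using mul_eq_zero.mp hDt |>.resolve_left hD⟩
end

section
/- Let k ≥ 2, a > 0, θ > 0 with θ ≠ 1, and let x, y, z > 0 satisfy the system: x = a(θ + x^k + y^k + θ^{-1}z^k)/(1 + θx^k + θ^{-1}y^k + z^k), y = a(θ^{-1} + x^k + y^k + θz^k)/(1 + θx^k + θ^{-1}y^k + z^k), z = (1 + θ^{-1}x^k + θy^k + z^k)/(1 + θx^k + θ^{-1}y^k + z^k). Then x = y if and only if z = 1. -/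
theorem stmt16 (k : ℕ) (hk : 2 ≤ k) (a θ : ℝ) (ha : 0 < a) (hθ : 0 < θ) (hθ1 : θ ≠ 1)
    (x y z : ℝ) (hx : 0 < x) (hy : 0 < y) (hz : 0 < z)
    (h1 : x = a * (θ + x ^ k + y ^ k + (1 / θ) * z ^ k) /
      (1 + θ * x ^ k + (1 / θ) * y ^ k + z ^ k))
    (h2 : y = a * (1 / θ + x ^ k + y ^ k + θ * z ^ k) /
      (1 + θ * x ^ k + (1 / θ) * y ^ k + z ^ k))
    (h3 : z = (1 + (1 / θ) * x ^ k + θ * y ^ k + z ^ k) /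
      (1 + θ * x ^ k + (1 / θ) * y ^ k + z ^ k)) :
    x = y ↔ z = 1 := by
  have hD : 0 < 1 + θ * x ^ k + (1 / θ) * y ^ k + z ^ k := by positivity
  rw [eq_div_iff hD.ne'] at h1 h2 h3
  constructor
  · rintro rfl
    have : z * (1 + θ * x ^ k + (1 / θ) * x ^ k + z ^ k) =
        1 * (1 + θ * x ^ k + (1 / θ) * x ^ k + z ^ k) := by linarith [h3]
    exact mul_right_cancel₀ hD.ne' this
  · rintro rfl
    have : x * (1 + θ * x ^ k + (1 / θ) * y ^ k + 1 ^ k) =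
        y * (1 + θ * x ^ k + (1 / θ) * y ^ k + 1 ^ k) := by
      rw [h1, h2]; ring
    exact mul_right_cancel₀ hD.ne' this
end

section
/- Let θ > 3 and v₁ = (θ² − 2θ − 1 − (θ−1)√((θ+1)(θ−3)))/2, v₂ = (θ² − 2θ − 1 + (θ−1)√((θ+1)(θ−3)))/2. Then 0 < v₁ < 1 < v₂, and hence θv₁²/(θv₁² + 2v₁ + θ) < θ/(2θ + 2) < θv₂²/(θv₂² + 2v₂ + θ). -/
theorem stmt18 (θ : ℝ) (hθ : 3 < θ)
    (v₁ v₂ : ℝ)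
    (hv1 : v₁ = (θ ^ 2 - 2 * θ - 1 - (θ - 1) * Real.sqrt ((θ + 1) * (θ - 3))) / 2)
    (hv2 : v₂ = (θ ^ 2 - 2 * θ - 1 + (θ - 1) * Real.sqrt ((θ + 1) * (θ - 3))) / 2) :
    (0 < v₁ ∧ v₁ < 1 ∧ 1 < v₂) ∧
    θ * v₁ ^ 2 / (θ * v₁ ^ 2 + 2 * v₁ + θ) < θ / (2 * θ + 2) ∧
    θ / (2 * θ + 2) < θ * v₂ ^ 2 / (θ * v₂ ^ 2 + 2 * v₂ + θ) := by
  set s := Real.sqrt ((θ + 1) * (θ - 3)) with hs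
  have hq : (0:ℝ) ≤ (θ + 1) * (θ - 3) := by nlinarith
  have hs0 : 0 ≤ s := Real.sqrt_nonneg _
  have hs2 : s ^ 2 = (θ + 1) * (θ - 3) := Real.sq_sqrt hq
  have hv2gt : 1 < v₂ := by
    rw [hv2]
    nlinarith [mul_nonneg (by linarith : (0:ℝ) ≤ θ - 1) hs0]
  have hprod : v₁ * v₂ = 1 := by
    rw [hv1, hv2]
    linear_combination (-(θ - 1) ^ 2 / 4) * hs2
  have hv1pos : 0 < v₁ := by
    nlinarith [hprod, hv2gt]
  have hv1lt : v₁ < 1 := by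
    nlinarith [hprod, hv2gt, hv1pos]
  refine ⟨⟨hv1pos, hv1lt, hv2gt⟩, ?_, ?_⟩
  · have hd1 : 0 < θ * v₁ ^ 2 + 2 * v₁ + θ := by nlinarith [sq_nonneg v₁]
    have hd2 : (0:ℝ) < 2 * θ + 2 := by linarith
    rw [div_lt_div_iff₀ hd1 hd2]
    nlinarith [mul_pos (mul_pos (by linarith : (0:ℝ) < θ) (by linarith : (0:ℝ) < 1 - v₁))
      (by nlinarith : (0:ℝ) < (θ + 2) * v₁ + θ)]
  · have hd1 : 0 < θ * v₂ ^ 2 + 2 * v₂ + θ := by nlinarith [sq_nonneg v₂]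
    have hd2 : (0:ℝ) < 2 * θ + 2 := by linarith
    rw [div_lt_div_iff₀ hd2 hd1]
    nlinarith [mul_pos (mul_pos (by linarith : (0:ℝ) < θ) (sub_pos.mpr hv2gt))
      (by nlinarith : (0:ℝ) < (θ + 2) * v₂ + θ)]
end

section
/- Let k ≥ 2 and γ > (k+1)/(k−1). Then the positive real polynomial equation u^{k+1} − γu^k + γu − 1 = 0 has at least three distinct positive roots, and the sequence of signs of its nonzero coefficients (+, −, +, −) has exactly three sign changes. -/
theorem stmt19 (k : ℕ) (hk : 2 ≤ k) (γ : ℝ) (hγ : ((k : ℝ) + 1) / ((k : ℝ) - 1) < γ) :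
    (∃ u₁ u₂ u₃ : ℝ, 0 < u₁ ∧ 0 < u₂ ∧ 0 < u₃ ∧
      u₁ ≠ u₂ ∧ u₁ ≠ u₃ ∧ u₂ ≠ u₃ ∧
      u₁ ^ (k + 1) - γ * u₁ ^ k + γ * u₁ - 1 = 0 ∧
      u₂ ^ (k + 1) - γ * u₂ ^ k + γ * u₂ - 1 = 0 ∧
      u₃ ^ (k + 1) - γ * u₃ ^ k + γ * u₃ - 1 = 0) ∧
    (([(1 : ℝ), -γ, γ, -1].zip [(1 : ℝ), -γ, γ, -1].tail).countP
      (fun p => decide (p.1 * p.2 < 0)) = 3) := by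
  have hk1 : (1:ℝ) ≤ (k:ℝ) - 1 := by
    have : (2:ℝ) ≤ (k:ℝ) := by exact_mod_cast hk
    linarith
  have hkpos : (0:ℝ) < (k:ℝ) - 1 := by linarith
  have hγgt : (k:ℝ) + 1 < γ * ((k:ℝ) - 1) := by
    rw [div_lt_iff₀ hkpos] at hγ; linarith
  have hγ1 : 1 < γ := by nlinarith
  -- the cofactor
  set h : ℝ → ℝ := fun u => u ^ k + (1 - γ) * (∑ i ∈ Finset.Ico 1 k, u ^ i) + 1 with hh
  have hcont : Continuous h := by
    apply Continuous.add
    apply Continuous.add (continuous_pow k)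
    exact continuous_const.mul (continuous_finset_sum _ fun i _ => continuous_pow i)
    exact continuous_const
  have hfact : ∀ u : ℝ, (u - 1) * h u = u ^ (k + 1) - γ * u ^ k + γ * u - 1 := by
    intro u
    have hsum : (u - 1) * (∑ i ∈ Finset.Ico 1 k, u ^ i) = u ^ k - u := by
      have h1 : (∑ i ∈ Finset.Ico 1 k, u ^ i) = (∑ i ∈ Finset.range k, u ^ i) - 1 := by
        rw [Finset.sum_Ico_eq_sub _ (by omega : 1 ≤ k)]
        simp
      have h2 : (∑ i ∈ Finset.range k, u ^ i) * (u - 1) = u ^ k - 1 := geom_sum_mul u k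
      rw [h1]; ring_nf; ring_nf at h2; linarith
    simp only [hh]
    have : (u - 1) * (u ^ k + (1 - γ) * (∑ i ∈ Finset.Ico 1 k, u ^ i) + 1)
        = (u - 1) * (u ^ k + 1) + (1 - γ) * ((u - 1) * (∑ i ∈ Finset.Ico 1 k, u ^ i)) := by ring
    rw [this, hsum]; ring
  -- values of h
  have hsum_one : (∑ i ∈ Finset.Ico 1 k, (1:ℝ) ^ i) = (k:ℝ) - 1 := by
    simp only [one_pow, Finset.sum_const, Nat.card_Ico, nsmul_eq_mul, mul_one]
    rw [Nat.cast_sub (by omega : 1 ≤ k), Nat.cast_one]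
  have hone : h 1 < 0 := by
    have : h 1 = 1 + (1 - γ) * ((k:ℝ) - 1) + 1 := by
      simp only [hh]; rw [hsum_one, one_pow]
    rw [this]; nlinarith
  have hzero : h 0 = 1 := by
    simp only [hh]
    rw [zero_pow (by omega : k ≠ 0)]
    rw [Finset.sum_eq_zero]
    · ring
    · intro i hi
      simp at hi
      exact zero_pow (by omega)
  -- big value
  set M : ℝ := (γ - 1) * ((k:ℝ) - 1) + 1 with hM
  have hM1 : 1 < M := by nlinarith
  have hMbig : 0 < h M := by
    have hMpos : (0:ℝ) < M := by linarith
    have hb : (∑ i ∈ Finset.Ico 1 k, M ^ i) ≤ ((k:ℝ) - 1) * M ^ (k - 1) := by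
      have : ∀ i ∈ Finset.Ico 1 k, M ^ i ≤ M ^ (k - 1) := by
        intro i hi
        simp at hi
        exact pow_le_pow_right₀ (by linarith) (by omega)
      calc (∑ i ∈ Finset.Ico 1 k, M ^ i) ≤ ∑ i ∈ Finset.Ico 1 k, M ^ (k - 1) :=
            Finset.sum_le_sum this
        _ = ((k:ℝ) - 1) * M ^ (k - 1) := by
            rw [Finset.sum_const, Nat.card_Ico, nsmul_eq_mul,
              Nat.cast_sub (by omega : 1 ≤ k), Nat.cast_one]
    have hMk : M ^ k = M * M ^ (k - 1) := by
      conv_lhs => rw [show k = 1 + (k - 1) by omega]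
      rw [pow_add, pow_one]
    have hMk1pos : (0:ℝ) < M ^ (k - 1) := pow_pos hMpos _
    simp only [hh]
    have key : (γ - 1) * (∑ i ∈ Finset.Ico 1 k, M ^ i) ≤ (γ - 1) * (((k:ℝ) - 1) * M ^ (k - 1)) :=
      mul_le_mul_of_nonneg_left hb (by linarith)
    have : (γ - 1) * (((k:ℝ) - 1) * M ^ (k - 1)) < M ^ k := by
      rw [hMk]
      have : (γ - 1) * ((k:ℝ) - 1) < M := by simp [hM]
      nlinarith
    nlinarith
  -- IVT
  have hIoo1 : (0:ℝ) ∈ Set.Ioo (h 1) (h 0) := by rw [hzero]; exact ⟨hone, one_pos⟩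
  obtain ⟨a, ha, hha⟩ := intermediate_value_Ioo' (by norm_num : (0:ℝ) ≤ 1)
    hcont.continuousOn hIoo1
  have hIoo2 : (0:ℝ) ∈ Set.Ioo (h 1) (h M) := ⟨hone, hMbig⟩
  obtain ⟨b, hb, hhb⟩ := intermediate_value_Ioo (le_of_lt hM1)
    hcont.continuousOn hIoo2
  constructor
  · refine ⟨a, 1, b, ha.1, one_pos, by linarith [hb.1], ?_, ?_, ?_, ?_, ?_, ?_⟩
    · exact ne_of_lt ha.2
    · exact ne_of_lt (lt_trans ha.2 hb.1)
    · exact ne_of_lt hb.1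
    · rw [← hfact a, hha, mul_zero]
    · ring
    · rw [← hfact b, hhb, mul_zero]
  · have h1 : (1:ℝ) * -γ < 0 := by nlinarith
    have h2 : -γ * γ < 0 := by nlinarith
    have h3 : γ * -1 < 0 := by nlinarith
    have hpos : (0:ℝ) < γ := by linarith
    simp [List.countP, List.countP.go, h1, h2, h3, hpos, hpos.ne']
end
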